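/- arXiv:2502.19926 — 2 statements merged into one kernel-verified Lean document; each statement's English description precedes it below -/
import Mathlib

section
/- The meet of two digitally convex words of the same length (with respect to the dominance order) is digitally convex. -/
/-- A word is primitive if it is not a proper power: `w = v^n` implies `n = 1`. -/
def Primitive {α : Type*} (w : List α) : Prop :=
  ∀ (v : List α) (n : ℕ), w = (List.replicate n v).flatten → n = 1

/-- A Lyndon word: nonempty and lexicographically strictly smaller than all
its proper nonempty suffixes. -/
def Lyndon {α : Type*} [LinearOrder α] (w : List α) : Prop :=
  w ≠ [] ∧ ∀ u v : List α, w = u ++ v → u ≠ [] → v ≠ [] → List.Lex (· < ·) w v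

/-- A Lyndon word for the reversed order `1 < 0` on `Bool`. -/
def LyndonRev (w : List Bool) : Prop :=
  w ≠ [] ∧ ∀ u v : List Bool, w = u ++ v → u ≠ [] → v ≠ [] → List.Lex (· > ·) w v

/-- A binary word is balanced if the numbers of `1`s in any two factors of the
same length differ by at most 1. (`false` plays the role of `0`, `true` of `1`.) -/
def Balanced01 (w : List Bool) : Prop :=
  ∀ u v : List Bool, u <:+: w → v <:+: w → u.length = v.length →
    (u.count true : ℤ) - (v.count true : ℤ) ≤ 1

/-- `w` has period `p`: `w[i] = w[i+p]` for all valid indices. -/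
def HasPeriod (w : List Bool) (p : ℕ) : Prop :=
  ∀ i : ℕ, i + p < w.length → w[i]? = w[i + p]?

/-- A central word: it has coprime periods `p`, `q` and length `p + q - 2`. -/
def Central (w : List Bool) : Prop :=
  ∃ p q : ℕ, Nat.Coprime p q ∧ HasPeriod w p ∧ HasPeriod w q ∧ w.length + 2 = p + q

/-- The lower Christoffel word of slope `b/a`: letter `i` is `1` (`true`) iff the
line `y = bx/(a+b)`... encoded via floor differences `⌊(i+1)b/(a+b)⌋ - ⌊ib/(a+b)⌋`. -/
def chr (a b : ℕ) : List Bool :=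
  List.ofFn (fun i : Fin (a + b) =>
    decide ((i : ℕ) * b / (a + b) < ((i : ℕ) + 1) * b / (a + b)))

/-- An (upward) digitally convex word: all factors of its Lyndon factorization
(for the order `0 < 1`) are balanced Lyndon words, i.e. primitive lower
Christoffel words. -/
def DC (w : List Bool) : Prop :=
  ∃ L : List (List Bool), L.flatten = w ∧ (∀ x ∈ L, Lyndon x ∧ Balanced01 x) ∧
    L.Chain' (fun a b => ¬ List.Lex (· < ·) a b)

/-- A downward digitally convex word: all factors of its Lyndon factorization
for the order `1 < 0` are balanced. -/
def DCdown (w : List Bool) : Prop :=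
  ∃ L : List (List Bool), L.flatten = w ∧ (∀ x ∈ L, LyndonRev x ∧ Balanced01 x) ∧
    L.Chain' (fun a b => ¬ List.Lex (· > ·) a b)

/-- `(u, v)` is the standard factorization of `u ++ v`: both parts nonempty and
`v` is the lexicographically least proper nonempty suffix of `u ++ v`. -/
def StdFact (u v : List Bool) : Prop :=
  u ≠ [] ∧ v ≠ [] ∧
    ∀ s : List Bool, s ≠ [] → s ≠ u ++ v → s <:+ u ++ v →
      s = v ∨ List.Lex (· < ·) v s

/-- A word is unbordered if it has no nonempty proper border. -/
def Unbordered (w : List Bool) : Prop :=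
  ∀ u : List Bool, u <+: w → u <:+ w → u ≠ w → u = []


/-!
Read a binary word as a lattice path with prefix counts `ones w`. A word is digitally convex iff
every point of its path lies less than one unit below each chord between two points of the path
on either side of it (`ChordBound`). Indeed, a factorization into Christoffel words of
nonincreasing slopes is the digitization of the concave polygon through its corners; conversely,
a path with the chord bound factors by repeatedly splitting off a prefix of maximal slope. The
chord bound passes to the pointwise minimum of two paths, which is the path of the meet.

Balanced Lyndon words are Christoffel words: the prefix is the poorest and the suffix the richest
factor of each length, and averaging over the circular windows then pins down every prefix count.
-/

namespace DigitallyConvex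

/-- The prefix count `s_w[j]`: the height after `j` steps of the lattice path of `w`, with
`true` an up step. -/
def ones (w : List Bool) (j : ℕ) : ℕ := (w.take j).count true

@[simp] theorem ones_zero (w : List Bool) : ones w 0 = 0 := rfl

theorem ones_cons_succ (c : Bool) (x : List Bool) (j : ℕ) :
    ones (c :: x) (j + 1) = c.toNat + ones x j := by
  cases c <;> simp [ones, Nat.add_comm]

theorem ones_add (w : List Bool) (i t : ℕ) : ones w (i + t) = ones w i + ones (w.drop i) t := by
  rw [ones, ones, ones, List.take_add, List.count_append]

theorem ones_mono (w : List Bool) {i j : ℕ} (h : i ≤ j) : ones w i ≤ ones w j := by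
  obtain ⟨t, rfl⟩ := Nat.exists_eq_add_of_le h
  rw [ones_add]
  exact Nat.le_add_right _ _

theorem ones_le (w : List Bool) (j : ℕ) : ones w j ≤ j :=
  List.count_le_length.trans (List.length_take_le _ _)

theorem ones_length (w : List Bool) : ones w w.length = w.count true := by
  rw [ones, List.take_length]

theorem ones_succ (w : List Bool) {t : ℕ} (h : t < w.length) :
    ones w (t + 1) = ones w t + w[t].toNat := by
  rw [ones_add, List.drop_eq_getElem_cons h, ones_cons_succ, ones_zero, Nat.add_zero]

theorem ones_take (w : List Bool) {k j : ℕ} (h : j ≤ k) : ones (w.take k) j = ones w j := by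
  rw [ones, ones, List.take_take, min_eq_left h]

theorem ones_append_of_le (x y : List Bool) {t : ℕ} (h : t ≤ x.length) :
    ones (x ++ y) t = ones x t := by
  rw [ones, ones, List.take_append_of_le_length h]

theorem ones_append_add (x y : List Bool) (t : ℕ) :
    ones (x ++ y) (x.length + t) = x.count true + ones y t := by
  rw [ones_add, List.drop_left, ones_append_of_le x y le_rfl, ones_length]

theorem eq_of_ones_eq {x y : List Bool} (hlen : x.length = y.length)
    (h : ∀ j ≤ x.length, ones x j = ones y j) : x = y := by
  induction x generalizing y with
  | nil => exact (List.length_eq_zero_iff.mp hlen.symm).symm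
  | cons a x ih =>
    obtain _ | ⟨b, y⟩ := y
    · simp at hlen
    have h1 := h 1 (by simp)
    rw [ones_cons_succ, ones_cons_succ, ones_zero, ones_zero] at h1
    have hab : a = b := by cases a <;> cases b <;> simp_all
    subst hab
    congr
    refine ih (by simpa using hlen) fun j hj => ?_
    have := h (j + 1) (by simpa using hj)
    rwa [ones_cons_succ, ones_cons_succ, Nat.add_left_cancel_iff] at this

theorem exists_ones_of_infix {u w : List Bool} (h : u <:+: w) :
    ∃ i, i + u.length ≤ w.length ∧ ones w i + u.count true = ones w (i + u.length) := by
  obtain ⟨s, t, rfl⟩ := h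
  refine ⟨s.length, by simp, ?_⟩
  rw [List.append_assoc, ones_append_add, ones_append_of_le _ _ le_rfl,
    ones_append_of_le _ _ le_rfl,
    ones_length, ones_length]

theorem ones_add_le_of_balanced {w : List Bool} (hB : Balanced01 w) {i i' l : ℕ}
    (h : i + l ≤ w.length) (h' : i' + l ≤ w.length) :
    ones w (i + l) + ones w i' ≤ ones w i + ones w (i' + l) + 1 := by
  have hinfix (a : ℕ) : (w.drop a).take l <:+: w :=
    ⟨w.take a, w.drop (a + l), by
      rw [List.append_assoc, ← List.drop_drop, List.take_append_drop, List.take_append_drop]⟩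
  have hb := hB _ _ (hinfix i) (hinfix i') (by simp; omega)
  have e := ones_add w i l
  have e' := ones_add w i' l
  simp only [ones] at e e' ⊢
  omega

theorem lt_of_ones_le {x y : List Bool}
    (hle : ∀ j ≤ x.length, j ≤ y.length → ones x j ≤ ones y j)
    (hlt : x.length < y.length ∨ ∃ j ≤ x.length, j ≤ y.length ∧ ones x j < ones y j) :
    x < y := by
  induction x generalizing y with
  | nil =>
    obtain _ | ⟨b, y⟩ := y
    · rcases hlt with h | ⟨j, hj, -, h⟩
      · simp at h
      · simp_all
    · exact List.Lex.nil
  | cons a x ih =>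
    obtain _ | ⟨b, y⟩ := y
    · rcases hlt with h | ⟨j, -, hj, h⟩
      · simp at h
      · simp_all
    have h1 := hle 1 (by simp) (by simp)
    rw [ones_cons_succ, ones_cons_succ, ones_zero, ones_zero] at h1
    obtain ⟨rfl, rfl⟩ | rfl : (a = false ∧ b = true) ∨ a = b := by
      cases a <;> cases b <;> simp_all
    · exact List.Lex.rel (by decide)
    refine List.Lex.cons (ih (fun j hj hj' => ?_) ?_)
    · have := hle (j + 1) (by simpa using hj) (by simpa using hj')
      rwa [ones_cons_succ, ones_cons_succ, Nat.add_le_add_iff_left] at this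
    · rcases hlt with h | ⟨_ | j, hj, hj', h⟩
      · exact Or.inl (by simpa using h)
      · simp at h
      · rw [ones_cons_succ, ones_cons_succ, Nat.add_lt_add_iff_left] at h
        exact Or.inr ⟨j, by simpa using hj, by simpa using hj', h⟩

theorem exists_ones_of_lt {x y : List Bool} (h : x < y) (hlen : y.length ≤ x.length) :
    ∃ d < y.length, (∀ t ≤ d, ones x t = ones y t) ∧
      ones x (d + 1) = ones x d ∧ ones y (d + 1) = ones y d + 1 := by
  rcases List.lt_iff_exists.mp h with ⟨-, h⟩ | ⟨d, hx, hy, hagree, hd⟩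
  · omega
  have htake : x.take d = y.take d :=
    List.ext_getElem (by simp; omega) fun j hj _ => by simpa using hagree j (by simp at hj; omega)
  have hxy : x[d] = false ∧ y[d] = true := by revert hd; cases x[d] <;> cases y[d] <;> decide
  refine ⟨d, hy, fun t ht => ?_, ?_, ?_⟩
  · rw [← ones_take x ht, ← ones_take y ht, htake]
  · rw [ones_succ x hx, hxy.1]; rfl
  · rw [ones_succ y hy, hxy.2]; rfl

theorem div_le_div_of_cross_mul_le {x y n n' : ℕ} (hn : 0 < n) (hn' : 0 < n')
    (h : x * n' ≤ y * n) : x / n ≤ y / n' := by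
  rw [Nat.le_div_iff_mul_le hn']
  refine Nat.le_of_mul_le_mul_right ?_ hn
  calc x / n * n' * n = x / n * n * n' := by ring
    _ ≤ x * n' := Nat.mul_le_mul_right _ (Nat.div_mul_le_self x n)
    _ ≤ y * n := h

theorem length_chr (a b : ℕ) : (chr a b).length = a + b := by simp [chr]

theorem ones_chr (a b : ℕ) {j : ℕ} (hj : j ≤ a + b) : ones (chr a b) j = j * b / (a + b) := by
  induction j with
  | zero => simp
  | succ j ih =>
    have hjl : j < (chr a b).length := by rw [length_chr]; omega
    have hget : (chr a b)[j] = decide (j * b / (a + b) < (j + 1) * b / (a + b)) := by simp [chr]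
    have hmono : j * b / (a + b) ≤ (j + 1) * b / (a + b) :=
      Nat.div_le_div_right (Nat.mul_le_mul_right _ j.le_succ)
    have hstep : (j + 1) * b / (a + b) ≤ j * b / (a + b) + 1 := by
      calc (j + 1) * b / (a + b) ≤ (j * b + (a + b)) / (a + b) :=
            Nat.div_le_div_right (by rw [Nat.succ_mul]; omega)
        _ = j * b / (a + b) + 1 := Nat.add_div_right _ (by omega)
    rw [ones_succ _ hjl, ih (by omega), hget]
    by_cases h : j * b / (a + b) < (j + 1) * b / (a + b) <;> simp [h] <;> omega

theorem count_chr {a b : ℕ} (hn : 0 < a + b) : (chr a b).count true = b := by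
  rw [← ones_length, length_chr, ones_chr _ _ le_rfl, Nat.mul_div_cancel_left _ hn]

theorem chr_balanced (a b : ℕ) : Balanced01 (chr a b) := by
  intro u v hu hv hlen
  obtain ⟨i, hi, hu⟩ := exists_ones_of_infix hu
  obtain ⟨i', hi', hv⟩ := exists_ones_of_infix hv
  rw [length_chr] at hi hi'
  rw [← hlen] at hi' hv
  rw [ones_chr _ _ (by omega), ones_chr _ _ (by omega)] at hu hv
  have hup : (i * b + u.length * b) / (a + b) ≤ i * b / (a + b) + u.length * b / (a + b) + 1 :=
    Nat.add_div_le_div_add_div_add_one _ _ _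
  have hlow : i' * b / (a + b) + u.length * b / (a + b) ≤ (i' * b + u.length * b) / (a + b) :=
    Nat.div_add_div_le_add_div
  rw [Nat.add_mul] at hu hv
  omega

theorem div_add_div_lt_of_not_dvd {n x y : ℕ} (hx : ¬ n ∣ x) (hxy : n ∣ x + y) :
    x / n + y / n < (x + y) / n := by
  have hxn : n * (x / n) < x := Nat.mul_div_lt_iff_not_dvd.mpr hx
  have hyn : n * (y / n) ≤ y := Nat.mul_div_le y n
  refine Nat.lt_of_mul_lt_mul_left (a := n) ?_
  rw [Nat.mul_div_cancel' hxy, Nat.mul_add]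
  omega

theorem chr_lyndon {a b : ℕ} (hco : Nat.Coprime b (a + b)) (hn : 0 < a + b) :
    Lyndon (chr a b) := by
  refine ⟨List.ne_nil_of_length_pos (by rw [length_chr]; exact hn), fun u v huv hu hv => ?_⟩
  have hlen := congrArg List.length huv
  rw [List.length_append, length_chr] at hlen
  have ht : 0 < u.length ∧ u.length < a + b :=
    ⟨List.length_pos_iff.mpr hu, by have := List.length_pos_iff.mpr hv; omega⟩
  have hsuffix (j : ℕ) (hj : u.length + j ≤ a + b) :
      ones v j = (u.length + j) * b / (a + b) - u.length * b / (a + b) := by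
    have := ones_add (chr a b) u.length j
    rw [ones_chr _ _ hj, ones_chr _ _ (by omega), huv, List.drop_left] at this
    omega
  apply lt_of_ones_le
  · intro j hj hj'
    rw [length_chr] at hj
    rw [hsuffix j (by omega), ones_chr _ _ hj, Nat.add_mul]
    have := @Nat.div_add_div_le_add_div (u.length * b) (j * b) (a + b)
    omega
  · refine Or.inr ⟨v.length, by rw [length_chr]; omega, le_rfl, ?_⟩
    rw [hsuffix _ (by omega), ones_chr _ _ (by omega), ← hlen, Nat.mul_div_cancel_left _ hn]
    -- the slope `b / (a + b)` is in lowest terms, so the path meets no lattice point at `u.length`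
    have hndvd : ¬ (a + b) ∣ u.length * b := fun hdvd =>
      absurd (Nat.le_of_dvd ht.1 (hco.symm.dvd_of_dvd_mul_right hdvd)) (by omega)
    have := div_add_div_lt_of_not_dvd (y := v.length * b) hndvd
      ⟨b, by rw [← Nat.add_mul, ← hlen]⟩
    rw [← Nat.add_mul, ← hlen, Nat.mul_div_cancel_left _ hn] at this
    omega

theorem chr_lt_chr_of_slope_lt {a b c d : ℕ} (h : b * (c + d) < d * (a + b)) :
    chr a b < chr c d := by
  have hab : 0 < a + b := Nat.pos_of_ne_zero fun h0 => by simp [h0] at h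
  have hd : 0 < d := Nat.pos_of_ne_zero fun h0 => by simp [h0] at h
  have hcd : 0 < c + d := by omega
  apply lt_of_ones_le
  · intro j hj hj'
    rw [length_chr] at hj hj'
    rw [ones_chr _ _ hj, ones_chr _ _ hj']
    refine div_le_div_of_cross_mul_le hab hcd ?_
    calc j * b * (c + d) = j * (b * (c + d)) := by ring
      _ ≤ j * (d * (a + b)) := Nat.mul_le_mul_left _ h.le
      _ = j * d * (a + b) := by ring
  · rcases lt_or_ge (a + b) (c + d) with hlt | hge
    · exact Or.inl (by simpa [length_chr] using hlt)
    refine Or.inr ⟨c + d, by simpa [length_chr] using hge, by simp [length_chr], ?_⟩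
    rw [ones_chr _ _ hge, ones_chr _ _ le_rfl, Nat.mul_div_cancel_left _ hcd,
      Nat.div_lt_iff_lt_mul hab]
    linarith

theorem eq_of_coprime_of_slope_eq {a b c d : ℕ} (h1 : Nat.Coprime b (a + b))
    (h2 : Nat.Coprime d (c + d)) (h : d * (a + b) = b * (c + d)) : a = c ∧ b = d := by
  have hbd : b = d := Nat.dvd_antisymm
    (h1.dvd_of_dvd_mul_right ⟨c + d, by rw [← h, Nat.mul_comm]⟩)
    (h2.dvd_of_dvd_mul_right ⟨a + b, by rw [h, Nat.mul_comm]⟩)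
  subst hbd
  rcases Nat.eq_zero_or_pos b with rfl | hb
  · simp at h1 h2
    omega
  · have := Nat.eq_of_mul_eq_mul_left hb h
    omega

theorem not_chr_lt_chr {a b c d : ℕ} (h1 : Nat.Coprime b (a + b)) (h2 : Nat.Coprime d (c + d))
    (h : d * (a + b) ≤ b * (c + d)) : ¬ chr a b < chr c d := by
  rcases h.lt_or_eq with hlt | heq
  · exact List.lt_asymm (chr_lt_chr_of_slope_lt hlt)
  · obtain ⟨rfl, rfl⟩ := eq_of_coprime_of_slope_eq h1 h2 heq
    exact List.lt_irrefl _

theorem sum_range_add_of_periodic {F : ℕ → ℕ} {m j H : ℕ}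
    (hF : ∀ t < j, F (t + m) = F t + H) :
    ∑ t ∈ Finset.range m, F (t + j) = ∑ t ∈ Finset.range m, F t + j * H := by
  induction j with
  | zero => simp
  | succ j ih =>
    have hshift := Finset.sum_range_succ' (fun t => F (t + j)) m
    rw [Finset.sum_range_succ, Nat.add_comm m j, hF j j.lt_succ_self,
      ih fun t ht => hF t (by omega)] at hshift
    simp only [Nat.zero_add, Nat.add_right_comm _ 1 j] at hshift
    simp only [← Nat.add_assoc, Nat.succ_mul]
    omega

section BalancedLyndon

variable {x : List Bool}

theorem exists_ones_of_lyndon (hL : Lyndon x) {i : ℕ} (hi : 0 < i) (hix : i < x.length) :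
    ∃ d, i + d < x.length ∧ ones x (d + 1) = ones x d ∧
      (∀ t ≤ d, ones (x.drop i) t = ones x t) ∧ ones (x.drop i) (d + 1) = ones x d + 1 := by
  have hlt : x < x.drop i := hL.2 (x.take i) (x.drop i) (List.take_append_drop _ _).symm
    (List.ne_nil_of_length_pos (by simp; omega)) (List.ne_nil_of_length_pos (by simp; omega))
  obtain ⟨d, hd, hagree, hx, hy⟩ := exists_ones_of_lt hlt (by simp)
  refine ⟨d, by simp at hd; omega, hx, fun t ht => (hagree t ht).symm, ?_⟩
  rw [hy, ← hagree d le_rfl]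

/-- Every factor of a balanced Lyndon word has at least as many ones as the prefix, and at most as
many as the suffix, of the same length. -/
theorem ones_add_ones_le (hL : Lyndon x) (hB : Balanced01 x) {i l : ℕ} (h : i + l ≤ x.length) :
    ones x i + ones x l ≤ ones x (i + l) := by
  rcases Nat.eq_zero_or_pos i with rfl | hi
  · simp
  rcases Nat.eq_zero_or_pos l with rfl | hl
  · simp
  obtain ⟨d, hd, hflat, hagree, hrise⟩ := exists_ones_of_lyndon hL hi (by omega)
  have hsplit := ones_add x i
  rcases le_or_gt l d with hld | hdl
  · rw [hsplit, hagree l hld]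
  · obtain ⟨l', rfl⟩ : ∃ l', l = d + 1 + l' := ⟨l - (d + 1), by omega⟩
    have hcap := ones_add_le_of_balanced hB (i := d + 1) (i' := i + (d + 1)) (l := l')
      (by omega) (by omega)
    rw [← Nat.add_assoc i]
    have := hsplit (d + 1)
    omega

theorem ones_add_le_ones_add_count (hL : Lyndon x) (hB : Balanced01 x) {i s l : ℕ} (his : i ≤ s)
    (hsl : s + l = x.length) :
    ones x (i + l) + ones x s ≤ ones x i + x.count true := by
  induction l using Nat.strong_induction_on generalizing i s with
  | _ l ih =>
  rw [← ones_length]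
  rcases Nat.eq_zero_or_pos l with rfl | hl
  · simpa [Nat.add_comm] using ones_mono x (show s ≤ x.length by omega)
  rcases his.eq_or_lt with rfl | his
  · rw [hsl, Nat.add_comm]
  obtain ⟨d, hd, hflat, -, hrise⟩ := exists_ones_of_lyndon hL (i := s) (by omega) (by omega)
  obtain ⟨l', rfl⟩ : ∃ l', l = d + 1 + l' := ⟨l - (d + 1), by omega⟩
  have hrec := ih l' (by omega) (i := i + (d + 1)) (s := s + (d + 1)) (by omega) (by omega)
  have hcap := ones_add_le_of_balanced hB (i := i) (i' := 0) (l := d + 1) (by omega) (by omega)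
  have hs := ones_add x s (d + 1)
  rw [← ones_length, Nat.add_assoc i] at hrec
  simp only [ones_zero, Nat.zero_add] at hcap
  omega

/-- Bounds on the windows of the circular word `x`, read in `x ++ x`. -/
theorem ones_append_self_window (hL : Lyndon x) (hB : Balanced01 x) {t j : ℕ}
    (ht : t < x.length) (hj : j ≤ x.length) :
    ones (x ++ x) t + ones x j ≤ ones (x ++ x) (t + j) ∧
      ones (x ++ x) (t + j) ≤ ones (x ++ x) t + ones x j + 1 := by
  rw [ones_append_of_le _ _ ht.le]
  rcases le_or_gt (t + j) x.length with htj | htj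
  · rw [ones_append_of_le _ _ htj]
    have hcap' := ones_add_le_of_balanced hB (i' := 0) htj (by omega)
    simp only [ones_zero, Nat.zero_add] at hcap'
    exact ⟨ones_add_ones_le hL hB htj, by omega⟩
  · obtain ⟨e, he⟩ : ∃ e, t + j = x.length + e := ⟨t + j - x.length, by omega⟩
    rw [he, ones_append_add]
    have hcap := ones_add_le_of_balanced hB (i' := 0) (by omega : t + (x.length - t) ≤ x.length)
      (by omega)
    have hsuffix := ones_add_le_ones_add_count hL hB (i := e) (s := t) (l := x.length - t)
      (by omega) (by omega)
    have hprefix := ones_add_ones_le hL hB (i := e) (l := x.length - t) (by omega)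
    rw [show e + (x.length - t) = j by omega] at hsuffix hprefix
    rw [show t + (x.length - t) = x.length by omega, ones_length] at hcap
    simp only [ones_zero, Nat.zero_add] at hcap
    omega

/-- The `x.length` circular windows of length `j` hold `j * x.count true` ones in total; each holds
between `ones x j` and `ones x j + 1` ones, and the prefix window exactly `ones x j`. -/
theorem ones_density_bounds (hL : Lyndon x) (hB : Balanced01 x) {j : ℕ} (hj : j ≤ x.length) :
    x.length * ones x j ≤ j * x.count true ∧ j * x.count true < x.length * (ones x j + 1) := by
  have hm : 0 < x.length := List.length_pos_iff.mpr hL.1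
  have hsum := sum_range_add_of_periodic (F := ones (x ++ x)) (m := x.length) (j := j)
    (H := x.count true) fun t ht => by
      rw [Nat.add_comm, ones_append_add, ones_append_of_le _ _ (by omega), Nat.add_comm]
  have hwin (t) (ht : t ∈ Finset.range x.length) :=
    ones_append_self_window hL hB (Finset.mem_range.mp ht) hj
  constructor
  · have := Finset.sum_le_sum fun t ht => (hwin t ht).1
    rw [Finset.sum_add_distrib, Finset.sum_const, Finset.card_range, smul_eq_mul] at this
    linarith
  · have := Finset.sum_lt_sum (fun t ht => (hwin t ht).2)
      ⟨0, Finset.mem_range.mpr hm, by simp [ones_append_of_le _ _ hj]⟩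
    simp only [Finset.sum_add_distrib, Finset.sum_const, Finset.card_range, smul_eq_mul] at this
    linarith

theorem eq_chr_of_lyndon_of_balanced (hL : Lyndon x) (hB : Balanced01 x) :
    x = chr (x.length - x.count true) (x.count true) := by
  have hh : x.count true ≤ x.length := List.count_le_length
  refine eq_of_ones_eq (by rw [length_chr]; omega) fun j hj => ?_
  rw [ones_chr _ _ (by omega), Nat.sub_add_cancel hh]
  obtain ⟨hle, hlt⟩ := ones_density_bounds hL hB hj
  exact (Nat.div_eq_of_lt_le (by linarith) (by linarith)).symm

end BalancedLyndon

/-- Every point `(j, f j)` of the path lies less than one unit below the chord joining any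
`(i, f i)` and `(k, f k)` with `i ≤ j ≤ k`; here `j = i + a` and `k = i + a + b`. -/
def ChordBound (f : ℕ → ℕ) (n : ℕ) : Prop :=
  ∀ i a b, 0 < a + b → i + a + b ≤ n →
    b * f i + a * f (i + a + b) < (a + b) * (f (i + a) + 1)

theorem chordBound_min {f g : ℕ → ℕ} {n : ℕ} (hf : ChordBound f n) (hg : ChordBound g n) :
    ChordBound (fun t => min (f t) (g t)) n := by
  intro i a b hab hn
  have key {h : ℕ → ℕ} (hh : ChordBound h n) (hi : min (f i) (g i) ≤ h i)
      (hk : min (f (i + a + b)) (g (i + a + b)) ≤ h (i + a + b))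
      (hj : h (i + a) = min (f (i + a)) (g (i + a))) :
      b * min (f i) (g i) + a * min (f (i + a + b)) (g (i + a + b)) <
        (a + b) * (min (f (i + a)) (g (i + a)) + 1) :=
    hj ▸ lt_of_le_of_lt (Nat.add_le_add (Nat.mul_le_mul_left b hi) (Nat.mul_le_mul_left a hk))
      (hh i a b hab hn)
  rcases le_total (f (i + a)) (g (i + a)) with hfg | hgf
  · exact key hf (min_le_left _ _) (min_le_left _ _) (min_eq_left hfg).symm
  · exact key hg (min_le_right _ _) (min_le_right _ _) (min_eq_right hgf).symm

theorem ChordBound.shift {f g : ℕ → ℕ} {n K : ℕ} (hf : ChordBound f n)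
    (hfg : ∀ t, f (K + t) = f K + g t) : ChordBound g (n - K) := by
  intro i a b hab hn
  have := hf (K + i) a b hab (by omega)
  rw [Nat.add_assoc K i a, Nat.add_assoc K (i + a) b, hfg, hfg, hfg] at this
  nlinarith

theorem chord_le_of_antitone {R : Type*} [CommRing R] [LinearOrder R] [IsStrictOrderedRing R]
    {σ : ℕ → R} (hσ : Antitone σ) (i a b : ℕ) :
    b * ∑ u ∈ Finset.range i, σ u + a * ∑ u ∈ Finset.range (i + a + b), σ u ≤
      (a + b) * ∑ u ∈ Finset.range (i + a), σ u := by
  rw [Finset.sum_range_add _ (i + a), Finset.sum_range_add _ i]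
  have hleft : a • σ (i + a) ≤ ∑ u ∈ Finset.range a, σ (i + u) := by
    simpa using Finset.card_nsmul_le_sum (Finset.range a) (fun u => σ (i + u)) _
      fun u hu => hσ (by simp at hu; omega)
  have hright : ∑ u ∈ Finset.range b, σ (i + a + u) ≤ b • σ (i + a) := by
    simpa using Finset.sum_le_card_nsmul (Finset.range b) (fun u => σ (i + a + u)) _
      fun u _ => hσ (by omega)
  rw [nsmul_eq_mul] at hleft hright
  have ha : (0 : R) ≤ a := Nat.cast_nonneg a
  have hb : (0 : R) ≤ b := Nat.cast_nonneg b
  nlinarith [mul_le_mul_of_nonneg_left hleft hb, mul_le_mul_of_nonneg_left hright ha]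

section ChristoffelChains

/-- `SlopeGe p q`: the slope `p.2 / (p.1 + p.2)` of `chr p.1 p.2` is at least that of
`chr q.1 q.2`. -/
def SlopeGe (p q : ℕ × ℕ) : Prop := q.2 * (p.1 + p.2) ≤ p.2 * (q.1 + q.2)

/-- The slope of each step of the path of `(L.map (Function.uncurry chr)).flatten`, extended by
`0` beyond its end. -/
def slopes : List (ℕ × ℕ) → ℕ → ℚ
  | [], _ => 0
  | p :: L, t => if t < p.1 + p.2 then (p.2 : ℚ) / (p.1 + p.2) else slopes L (t - (p.1 + p.2))

variable {L : List (ℕ × ℕ)}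

theorem slopes_antitone (hpos : ∀ p ∈ L, 0 < p.1 + p.2) (hL : L.IsChain SlopeGe) :
    Antitone (slopes L) := by
  refine antitone_nat_of_succ_le fun t => ?_
  induction L generalizing t with
  | nil => simp [slopes]
  | cons p L ih =>
    have hhead : slopes L 0 ≤ (p.2 : ℚ) / (p.1 + p.2) := by
      obtain _ | ⟨q, L'⟩ := L
      · simp [slopes]; positivity
      have hq := hpos q (by simp)
      have hpq : SlopeGe p q := List.isChain_cons_cons.mp hL |>.1
      simp only [slopes, if_pos hq]
      rw [div_le_div_iff₀ (by exact_mod_cast hq) (by exact_mod_cast hpos p (by simp))]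
      exact_mod_cast hpq
    have ih' := ih (fun q hq => hpos q (by simp [hq])) hL.tail
    simp only [slopes]
    split_ifs with h1 h2 h2
    · exact le_rfl
    · omega
    · rwa [show t + 1 - (p.1 + p.2) = 0 by omega]
    · rw [show t + 1 - (p.1 + p.2) = t - (p.1 + p.2) + 1 by omega]
      exact ih' _

/-- The concave piecewise-linear path through the corners of the factorization stays within one
unit above the lattice path. -/
theorem ones_le_sum_slopes_lt (hpos : ∀ p ∈ L, 0 < p.1 + p.2) {t : ℕ}
    (ht : t ≤ (L.map (Function.uncurry chr)).flatten.length) :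
    (ones (L.map (Function.uncurry chr)).flatten t : ℚ) ≤
        ∑ u ∈ Finset.range t, slopes L u ∧
      ∑ u ∈ Finset.range t, slopes L u < ones (L.map (Function.uncurry chr)).flatten t + 1 := by
  induction L generalizing t with
  | nil => simp_all
  | cons p L ih =>
    obtain ⟨a, b⟩ := p
    have hn : 0 < a + b := hpos (a, b) (by simp)
    simp only [List.map_cons, Function.uncurry_apply_pair, List.flatten_cons] at ht ⊢
    rcases le_or_gt t (a + b) with hta | hta
    · have hsum :
          ∑ u ∈ Finset.range t, slopes ((a, b) :: L) u = t * ((b : ℚ) / (a + b)) := by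
        rw [Finset.sum_congr rfl fun u hu => by
          simp only [slopes]; rw [if_pos (by simp at hu; omega)]]
        simp
      rw [hsum, ones_append_of_le _ _ (by rwa [length_chr]), ones_chr _ _ hta, ← mul_div_assoc]
      have hfloor := Nat.floor_div_eq_div (K := ℚ) (t * b) (a + b)
      push_cast at hfloor
      rw [← hfloor]
      exact ⟨Nat.floor_le (by positivity), Nat.lt_floor_add_one _⟩
    · obtain ⟨t', rfl⟩ : ∃ t', t = a + b + t' := ⟨t - (a + b), by omega⟩
      have hsum : ∑ u ∈ Finset.range (a + b + t'), slopes ((a, b) :: L) u =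
          b + ∑ u ∈ Finset.range t', slopes L u := by
        rw [Finset.sum_range_add, Finset.sum_congr rfl fun u hu => by
          simp only [slopes]; rw [if_pos (by simpa using hu)]]
        simp only [slopes, Finset.sum_const, Finset.card_range, nsmul_eq_mul,
          add_lt_iff_neg_left, not_lt_zero, if_false, Nat.add_sub_cancel_left]
        push_cast
        rw [mul_div_cancel₀ _ (by exact_mod_cast hn.ne')]
      rw [List.length_append, length_chr] at ht
      rw [hsum, ← length_chr a b, ones_append_add, count_chr hn]
      obtain ⟨h1, h2⟩ := ih (fun q hq => hpos q (by simp [hq])) (t := t') (by omega)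
      push_cast
      constructor <;> linarith

theorem chordBound_flatten_chr (hpos : ∀ p ∈ L, 0 < p.1 + p.2) (hL : L.IsChain SlopeGe) :
    ChordBound (ones (L.map (Function.uncurry chr)).flatten)
      (L.map (Function.uncurry chr)).flatten.length := by
  intro i a b hab hn
  set w := (L.map (Function.uncurry chr)).flatten
  have hi := ones_le_sum_slopes_lt hpos (show i ≤ w.length by omega)
  have hj := ones_le_sum_slopes_lt hpos (show i + a ≤ w.length by omega)
  have hk := ones_le_sum_slopes_lt hpos hn
  have hconc := chord_le_of_antitone (slopes_antitone hpos hL) i a b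
  have hab' : (0 : ℚ) < a + b := by exact_mod_cast hab
  have : (b * ones w i + a * ones w (i + a + b) : ℚ) < (a + b) * (ones w (i + a) + 1) := by
    nlinarith [mul_le_mul_of_nonneg_left hi.1 (Nat.cast_nonneg (α := ℚ) b),
      mul_le_mul_of_nonneg_left hk.1 (Nat.cast_nonneg (α := ℚ) a),
      mul_lt_mul_of_pos_left hj.2 hab']
  exact_mod_cast this

end ChristoffelChains

section Factorizations

variable {w : List Bool}

theorem exists_chr_chain_of_dc (h : DC w) :
    ∃ L : List (ℕ × ℕ), (∀ p ∈ L, 0 < p.1 + p.2) ∧ L.IsChain SlopeGe ∧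
      (L.map (Function.uncurry chr)).flatten = w := by
  obtain ⟨Lw, rfl, hfac, hchain⟩ := h
  let pair (x : List Bool) : ℕ × ℕ := (x.length - x.count true, x.count true)
  have hpair (x : List Bool) (hx : x ∈ Lw) : Function.uncurry chr (pair x) = x :=
    (eq_chr_of_lyndon_of_balanced (hfac x hx).1 (hfac x hx).2).symm
  have hlen (x : List Bool) (hx : x ∈ Lw) : (pair x).1 + (pair x).2 = x.length := by
    have := length_chr (pair x).1 (pair x).2
    rw [← Function.uncurry_apply_pair chr, hpair x hx] at this
    exact this.symm
  refine ⟨Lw.map pair, ?_, ?_, ?_⟩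
  · simp only [List.mem_map]
    rintro _ ⟨x, hx, rfl⟩
    rw [hlen x hx]
    exact List.length_pos_iff.mpr (hfac x hx).1.1
  · refine List.isChain_map pair |>.mpr (hchain.imp_of_mem_imp fun x y hx hy hxy => ?_)
    refine not_lt.mp fun hlt => hxy ?_
    rw [← hpair x hx, ← hpair y hy]
    exact chr_lt_chr_of_slope_lt hlt
  · rw [List.map_map]
    congr 1
    exact List.map_congr_left hpair |>.trans (List.map_id _)

theorem dc_of_chr_chain {L : List (ℕ × ℕ)}
    (hL : ∀ p ∈ L, Nat.Coprime p.2 (p.1 + p.2) ∧ 0 < p.1 + p.2) (hchain : L.IsChain SlopeGe) :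
    DC (L.map (Function.uncurry chr)).flatten := by
  refine ⟨_, rfl, ?_, ?_⟩
  · simp only [List.mem_map]
    rintro _ ⟨p, hp, rfl⟩
    exact ⟨chr_lyndon (hL p hp).1 (hL p hp).2, chr_balanced _ _⟩
  · refine List.isChain_map _ |>.mpr (hchain.imp_of_mem_imp fun p q hp hq hpq => ?_)
    exact not_chr_lt_chr (hL p hp).1 (hL q hq).1 hpq

theorem exists_maxSlope {f : ℕ → ℕ} {n : ℕ} (h0 : f 0 = 0) (hn : 0 < n) :
    ∃ K, 0 < K ∧ K ≤ n ∧ ∀ k ≤ n, f k * K ≤ f K * k := by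
  obtain ⟨K, hK, hmax⟩ := Finset.exists_max_image (Finset.Icc 1 n) (fun k => (f k : ℚ) / k)
    ⟨1, by simp; omega⟩
  rw [Finset.mem_Icc] at hK
  refine ⟨K, hK.1, hK.2, fun k hk => ?_⟩
  rcases Nat.eq_zero_or_pos k with rfl | hk0
  · simp [h0]
  have := hmax k (Finset.mem_Icc.mpr ⟨hk0, hk⟩)
  rw [div_le_div_iff₀ (by exact_mod_cast hk0) (by exact_mod_cast hK.1)] at this
  exact_mod_cast this

theorem eq_div_of_maxSlope {f : ℕ → ℕ} {n K : ℕ} (hf : ChordBound f n) (h0 : f 0 = 0)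
    (hK : 0 < K) (hKn : K ≤ n) (hmax : ∀ k ≤ n, f k * K ≤ f K * k) {j : ℕ}
    (hj : j ≤ K) :
    f j = j * f K / K := by
  have hup : f j ≤ j * f K / K := by
    rw [Nat.le_div_iff_mul_le hK, Nat.mul_comm j]
    exact hmax j (by omega)
  have hlow : j * f K / K < f j + 1 := by
    have := hf 0 j (K - j) (by omega) (by omega)
    rw [h0, Nat.zero_add, Nat.add_sub_cancel' hj] at this
    rw [Nat.div_lt_iff_lt_mul hK]
    linarith
  omega

theorem exists_coprime_maxSlope {f : ℕ → ℕ} {n : ℕ} (hf : ChordBound f n) (h0 : f 0 = 0)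
    (hn : 0 < n) :
    ∃ K, 0 < K ∧ K ≤ n ∧ (∀ k ≤ n, f k * K ≤ f K * k) ∧ Nat.Coprime (f K) K := by
  obtain ⟨K, hK, hKn, hmax⟩ := exists_maxSlope h0 hn
  set g := Nat.gcd (f K) K
  have hg : 0 < g := Nat.gcd_pos_of_pos_right _ hK
  obtain ⟨p, hp⟩ : g ∣ f K := Nat.gcd_dvd_left _ _
  obtain ⟨q, hq⟩ : g ∣ K := Nat.gcd_dvd_right _ _
  have hq0 : 0 < q := Nat.pos_of_mul_pos_left (hq ▸ hK)
  have hqK : q ≤ K := hq ▸ Nat.le_mul_of_pos_left q hg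
  -- the reduced point `(q, p)` of the maximal chord is itself on the path
  have hfq : f q = p := by
    rw [eq_div_of_maxSlope hf h0 hK hKn hmax hqK, hp, hq, Nat.mul_left_comm, ← Nat.mul_assoc,
      Nat.mul_div_cancel_left _ (Nat.mul_pos hg hq0)]
  refine ⟨q, hq0, hqK.trans hKn, fun k hk => ?_, ?_⟩
  · refine Nat.le_of_mul_le_mul_left ?_ hg
    have := hmax k hk
    rw [hp, hq] at this
    rw [hfq]
    linarith
  · rw [hfq]
    have := Nat.coprime_div_gcd_div_gcd (m := f K) (n := K) hg
    rwa [show f K / g = p by rw [hp, Nat.mul_div_cancel_left _ hg],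
      show K / g = q by rw [hq, Nat.mul_div_cancel_left _ hg]] at this

/-- The first factor of the rest of the path ends at a point of the path, hence below the chord of
maximal slope. -/
theorem slopeGe_of_maxSlope {K : ℕ} (hcK : ones w K ≤ K)
    (hmax : ∀ k ≤ w.length, ones w k * K ≤ ones w K * k) {a b : ℕ} (hab : 0 < a + b)
    {y : List Bool} (hy : w.drop K = chr a b ++ y) : SlopeGe (K - ones w K, ones w K) (a, b) := by
  have hlen : a + b ≤ w.length - K := by
    rw [← List.length_drop, hy, List.length_append, length_chr]
    omega
  have hrise : ones (w.drop K) (a + b) = b := by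
    rw [hy, ← length_chr a b, ones_append_of_le _ _ le_rfl, ones_length, count_chr hab]
  have := hmax (K + (a + b)) (by omega)
  rw [ones_add, hrise] at this
  show b * (K - ones w K + ones w K) ≤ ones w K * (a + b)
  rw [Nat.sub_add_cancel hcK]
  nlinarith

/-- Split off a prefix of maximal slope, in lowest terms: it is a primitive Christoffel word, and
the rest of the path still satisfies the chord bound with no larger slopes. -/
theorem exists_chr_chain_of_chordBound (hw : ChordBound (ones w) w.length) :
    ∃ L : List (ℕ × ℕ), (∀ p ∈ L, Nat.Coprime p.2 (p.1 + p.2) ∧ 0 < p.1 + p.2) ∧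
      L.IsChain SlopeGe ∧ (L.map (Function.uncurry chr)).flatten = w := by
  induction hn : w.length using Nat.strong_induction_on generalizing w with
  | _ n ih =>
  rcases Nat.eq_zero_or_pos n with rfl | hn0
  · exact ⟨[], by simp, List.IsChain.nil, by simpa using (List.length_eq_zero_iff.mp hn).symm⟩
  subst hn
  obtain ⟨K, hK, hKn, hmax, hco⟩ := exists_coprime_maxSlope hw (ones_zero w) hn0
  have hcK : ones w K ≤ K := ones_le w K
  have htake : w.take K = chr (K - ones w K) (ones w K) := by
    refine eq_of_ones_eq (by simp [length_chr]; omega) fun j hj => ?_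
    simp only [List.length_take] at hj
    rw [ones_take w (by omega), ones_chr _ _ (by omega), Nat.sub_add_cancel hcK]
    exact eq_div_of_maxSlope hw (ones_zero w) hK hKn hmax (by omega)
  have htail : ChordBound (ones (w.drop K)) (w.drop K).length := by
    rw [List.length_drop]
    exact hw.shift (ones_add w K)
  obtain ⟨L, hL, hchain, hflat⟩ := ih _ (by simp; omega) htail rfl
  refine ⟨(K - ones w K, ones w K) :: L, ?_, hchain.cons fun q hq => ?_, ?_⟩
  · intro p hp
    rcases List.mem_cons.mp hp with rfl | hp
    · simpa [Nat.sub_add_cancel hcK] using ⟨hco, hK⟩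
    · exact hL p hp
  · obtain ⟨L', rfl⟩ : ∃ L', L = q :: L' := by cases L <;> simp_all
    exact slopeGe_of_maxSlope hcK hmax (hL q (by simp)).2 (by rw [← hflat]; rfl)
  · rw [List.map_cons, List.flatten_cons, hflat, Function.uncurry_apply_pair, ← htake,
      List.take_append_drop]

theorem chordBound_of_dc (h : DC w) : ChordBound (ones w) w.length := by
  obtain ⟨L, hpos, hchain, rfl⟩ := exists_chr_chain_of_dc h
  exact chordBound_flatten_chr hpos hchain

theorem dc_of_chordBound (h : ChordBound (ones w) w.length) : DC w := by
  obtain ⟨L, hL, hchain, rfl⟩ := exists_chr_chain_of_chordBound h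
  exact dc_of_chr_chain hL hchain

end Factorizations

end DigitallyConvex

open DigitallyConvex in
/-- The meet (w.r.t. the dominance order) of two digitally convex words of the
same length is digitally convex. -/
theorem stmt16 (u v w : List Bool) (hu : DC u) (hv : DC v)
    (hlen : u.length = v.length) (hwlen : w.length = u.length)
    (hmeet : ∀ i : ℕ,
      (w.take i).count true = min ((u.take i).count true) ((v.take i).count true)) :
    DC w := by
  apply dc_of_chordBound
  rw [show ones w = fun t => min (ones u t) (ones v t) from funext hmeet, hwlen]
  exact chordBound_min (chordBound_of_dc hu) (hlen ▸ chordBound_of_dc hv)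
end

section
/- If w = u10v is a lower Christoffel word, then the word u01v obtained by exchanging that occurrence of 10 into 01 is not digitally convex. -/
/-!
Read a binary word as a lattice path, `0` a horizontal and `1` a vertical unit step. Let `x` be
a balanced Lyndon word with `m` letters and `k` ones, and `c j` the height of its path after
`j` steps. By balance, and because `x` is smaller than its suffixes, each of the `m` cyclic
windows of length `j` of `x` holds at most `c j + 1` ones, the window at `0` exactly `c j`,
and together they hold `j k`; so `j k < m (c j + 1)`: the path of `x` stays strictly above its
chord lowered by one. It also stays below the chord: past a highest point above the chord the
path would first repeat its own beginning and then take an extra step up, which by the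
previous bound climbs higher still. Comparing two such words at their first difference, the
two bounds show that lexicographic order refines slope order, so the Lyndon factors of a
digitally convex word have nonincreasing slopes and its whole path stays strictly above its
lowered chord. In the Christoffel word `u10v` with `b` ones and `a + b` letters the height
after `u1` is `⌊(|u| + 1) b / (a + b)⌋`; exchanging `10` for `01` lowers it by one, onto or
below the lowered chord.
-/

def prefixOnes (x : List Bool) (j : ℕ) : ℕ := (x.take j).count true

theorem prefixOnes_add (x : List Bool) (i j : ℕ) :
    prefixOnes x (i + j) = prefixOnes x i + ((x.drop i).take j).count true := by
  rw [prefixOnes, List.take_add, List.count_append]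
  rfl

@[simp]
theorem prefixOnes_zero (x : List Bool) : prefixOnes x 0 = 0 := by
  simp [prefixOnes]

theorem prefixOnes_length (x : List Bool) : prefixOnes x x.length = x.count true := by
  simp [prefixOnes]

theorem prefixOnes_add_of_take_eq {x : List Bool} {i t : ℕ}
    (he : x.take t = (x.drop i).take t) :
    prefixOnes x (i + t) = prefixOnes x i + prefixOnes x t := by
  rw [prefixOnes_add]
  unfold prefixOnes
  rw [he]

theorem prefixOnes_succ_of_getElem_true {x : List Bool} {t : ℕ} (ht : t < x.length)
    (h : x[t] = true) : prefixOnes x (t + 1) = prefixOnes x t + 1 := by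
  simp [prefixOnes, List.take_add_one, List.getElem?_eq_getElem ht, h]

theorem prefixOnes_succ_of_getElem_false {x : List Bool} {t : ℕ} (ht : t < x.length)
    (h : x[t] = false) : prefixOnes x (t + 1) = prefixOnes x t := by
  simp [prefixOnes, List.take_add_one, List.getElem?_eq_getElem ht, h]

theorem Balanced01.prefixOnes_add_le {x : List Bool} (hB : Balanced01 x) {i i' j : ℕ}
    (h : i + j ≤ x.length) (h' : i' + j ≤ x.length) :
    prefixOnes x (i + j) + prefixOnes x i' ≤ prefixOnes x (i' + j) + prefixOnes x i + 1 := by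
  have window_infix : ∀ i, (x.drop i).take j <:+: x := fun i =>
    (List.take_prefix _ _).isInfix.trans (List.drop_suffix _ _).isInfix
  have hbal := hB _ _ (window_infix i) (window_infix i') (by simp; omega)
  have hsplit := prefixOnes_add x i j
  have hsplit' := prefixOnes_add x i' j
  omega

theorem lex_lt_cases {s t : List Bool} (h : List.Lex (· < ·) s t) :
    (s <+: t ∧ s ≠ t) ∨
      ∃ n, ∃ (hs : n < s.length) (ht : n < t.length),
        s.take n = t.take n ∧ s[n] = false ∧ t[n] = true := by
  induction h with
  | nil => exact .inl ⟨List.nil_prefix, by simp⟩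
  | @cons a s t _ ih =>
    rcases ih with ⟨hp, hne⟩ | ⟨n, hs, ht, he, hsn, htn⟩
    · exact .inl ⟨List.prefix_cons_inj a |>.mpr hp, by simpa using hne⟩
    · exact .inr ⟨n + 1, by simpa using hs, by simpa using ht, by simpa using he, hsn, htn⟩
  | @rel a _ b _ hab =>
    obtain ⟨rfl, rfl⟩ := Bool.lt_iff.mp hab
    exact .inr ⟨0, by simp, by simp, rfl, rfl, rfl⟩

theorem Lyndon.exists_mismatch_drop {x : List Bool} (hL : Lyndon x) {i : ℕ} (hi : 0 < i)
    (hix : i < x.length) :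
    ∃ t, ∃ (ht : i + t < x.length), x.take t = (x.drop i).take t ∧
      x[t] = false ∧ x[i + t] = true := by
  have hlex : List.Lex (· < ·) x (x.drop i) :=
    hL.2 _ _ (x.take_append_drop i).symm
      (by rw [← List.length_pos_iff, List.length_take]; omega)
      (by rw [← List.length_pos_iff, List.length_drop]; omega)
  rcases lex_lt_cases hlex with ⟨hp, -⟩ | ⟨t, hxt, hdt, he, hx, hd⟩
  · have := hp.length_le
    rw [List.length_drop] at this
    omega
  · simp only [List.length_drop, List.getElem_drop] at hdt hd
    exact ⟨t, by omega, he, hx, hd⟩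

theorem Lyndon.prefixOnes_add_le {x : List Bool} (hL : Lyndon x) (hB : Balanced01 x)
    {i j : ℕ} (h : i + j ≤ x.length) :
    prefixOnes x i + prefixOnes x j ≤ prefixOnes x (i + j) := by
  rcases Nat.eq_zero_or_pos i with rfl | hi
  · simp
  rcases Nat.eq_zero_or_pos j with rfl | hj
  · simp
  obtain ⟨t, ht, he, hxt, hxit⟩ := hL.exists_mismatch_drop hi (by omega)
  rcases le_or_gt j t with hjt | htj
  · have hpre : x.take j = (x.drop i).take j := by
      simpa [List.take_take, Nat.min_eq_left hjt] using congrArg (List.take j) he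
    exact (prefixOnes_add_of_take_eq hpre).ge
  · -- past the mismatch the prefix is one `1` behind, and balance bounds the rest
    have hsplit := prefixOnes_add_of_take_eq he
    have hprefix := prefixOnes_succ_of_getElem_false (by omega) hxt
    have hwindow := prefixOnes_succ_of_getElem_true ht hxit
    have hbal := hB.prefixOnes_add_le (i := t + 1) (i' := i + t + 1) (j := j - (t + 1))
      (by omega) (by omega)
    rw [show t + 1 + (j - (t + 1)) = j by omega,
      show i + t + 1 + (j - (t + 1)) = i + j by omega] at hbal
    omega

/-- The height after `ℓ` steps of the lattice path of the periodic word `x x x ⋯`. -/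
def periodicPrefixOnes (x : List Bool) (ℓ : ℕ) : ℕ :=
  x.count true * (ℓ / x.length) + prefixOnes x (ℓ % x.length)

theorem periodicPrefixOnes_of_le {x : List Bool} {ℓ : ℕ} (h : ℓ ≤ x.length) :
    periodicPrefixOnes x ℓ = prefixOnes x ℓ := by
  rcases h.lt_or_eq with h | rfl
  · simp [periodicPrefixOnes, Nat.div_eq_of_lt h, Nat.mod_eq_of_lt h]
  rcases Nat.eq_zero_or_pos x.length with h0 | h0
  · simp [periodicPrefixOnes, h0]
  · simp [periodicPrefixOnes, Nat.div_self h0, prefixOnes_length]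

theorem periodicPrefixOnes_add_length (x : List Bool) (ℓ : ℕ) :
    periodicPrefixOnes x (ℓ + x.length) = periodicPrefixOnes x ℓ + x.count true := by
  rcases Nat.eq_zero_or_pos x.length with h0 | h0
  · simp [List.length_eq_zero_iff.mp h0]
  · simp only [periodicPrefixOnes, Nat.add_div_right _ h0, Nat.add_mod_right]
    ring

theorem sum_range_periodicPrefixOnes_add (x : List Bool) (j : ℕ) :
    ∑ i ∈ Finset.range x.length, periodicPrefixOnes x (i + j) =
      ∑ i ∈ Finset.range x.length, periodicPrefixOnes x i + j * x.count true := by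
  induction j with
  | zero => simp
  | succ j ih =>
    have shift := Finset.sum_range_succ' (fun i => periodicPrefixOnes x (i + j)) x.length
    rw [Finset.sum_range_succ, ih, Nat.add_comm x.length j, periodicPrefixOnes_add_length] at shift
    simp only [Nat.add_right_comm _ 1 j, Nat.zero_add] at shift
    simp only [← Nat.add_assoc, Nat.add_mul, Nat.one_mul]
    linarith

theorem Lyndon.periodicPrefixOnes_add_le {x : List Bool} (hL : Lyndon x) (hB : Balanced01 x)
    {i j : ℕ} (hi : i < x.length) (hj : j ≤ x.length) :
    periodicPrefixOnes x (i + j) ≤ periodicPrefixOnes x i + prefixOnes x j + 1 := by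
  rw [periodicPrefixOnes_of_le hi.le]
  rcases le_or_gt (i + j) x.length with h | h
  · rw [periodicPrefixOnes_of_le h]
    have hbal := hB.prefixOnes_add_le (i' := 0) h (by omega)
    simp only [prefixOnes_zero, Nat.zero_add, Nat.add_zero] at hbal
    omega
  · -- the window wraps around: a suffix of length `|x| - i` followed by a prefix
    obtain ⟨r, rfl⟩ : ∃ r, j = (x.length - i) + r := ⟨j - (x.length - i), by omega⟩
    have hwrap : i + (x.length - i + r) = r + x.length := by omega
    have hsuffix := hB.prefixOnes_add_le (i := i) (i' := 0) (j := x.length - i) (by omega)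
      (by omega)
    have hsplit := hL.prefixOnes_add_le hB (i := r) (j := x.length - i) (by omega)
    rw [Nat.add_sub_cancel' hi.le, prefixOnes_length] at hsuffix
    rw [hwrap, periodicPrefixOnes_add_length, periodicPrefixOnes_of_le (by omega),
      Nat.add_comm (x.length - i) r]
    simp only [Nat.zero_add, prefixOnes_zero] at hsuffix
    omega

theorem Lyndon.mul_count_lt {x : List Bool} (hL : Lyndon x) (hB : Balanced01 x) {j : ℕ}
    (hj : j ≤ x.length) : j * x.count true < x.length * (prefixOnes x j + 1) := by
  have hx : 0 < x.length := List.length_pos_iff.mpr hL.1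
  have hlt : ∑ i ∈ Finset.range x.length, periodicPrefixOnes x (i + j) <
      ∑ i ∈ Finset.range x.length, (periodicPrefixOnes x i + (prefixOnes x j + 1)) := by
    refine Finset.sum_lt_sum (fun i hi => ?_) ⟨0, by simpa using hx, ?_⟩
    · have hband := hL.periodicPrefixOnes_add_le hB (Finset.mem_range.mp hi) hj
      omega
    · simp [periodicPrefixOnes_of_le hj, periodicPrefixOnes_of_le (Nat.zero_le _)]
  rw [Finset.sum_add_distrib, Finset.sum_const, Finset.card_range, smul_eq_mul,
    sum_range_periodicPrefixOnes_add] at hlt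
  omega

/-- `|x|` times the height of the path of `x` above its chord after `ℓ` steps. -/
def chordGap (x : List Bool) (ℓ : ℕ) : ℤ := x.length * prefixOnes x ℓ - ℓ * x.count true

theorem Lyndon.exists_chordGap_lt {x : List Bool} (hL : Lyndon x) (hB : Balanced01 x) {i : ℕ}
    (hi : 0 < i) (hix : i < x.length) : ∃ ℓ ≤ x.length, chordGap x i < chordGap x ℓ := by
  obtain ⟨t, ht, he, hxt, hxit⟩ := hL.exists_mismatch_drop hi hix
  have hP := hL.mul_count_lt hB (j := t + 1) (by omega)
  rw [prefixOnes_succ_of_getElem_false (by omega) hxt] at hP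
  refine ⟨i + t + 1, ht, ?_⟩
  rw [chordGap, chordGap, prefixOnes_succ_of_getElem_true ht hxit,
    prefixOnes_add_of_take_eq he]
  push_cast
  have hP' : ((t : ℤ) + 1) * x.count true < x.length * (prefixOnes x t + 1) := by
    exact_mod_cast hP
  linarith

theorem Lyndon.length_mul_prefixOnes_le {x : List Bool} (hL : Lyndon x) (hB : Balanced01 x)
    {j : ℕ} (hj : j ≤ x.length) : x.length * prefixOnes x j ≤ j * x.count true := by
  obtain ⟨i, hi, hmax⟩ :=
    (Finset.range (x.length + 1)).exists_max_image (chordGap x) ⟨0, by simp⟩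
  rw [Finset.mem_range] at hi
  have hgap_j : chordGap x j ≤ chordGap x i := hmax j (Finset.mem_range.mpr (by omega))
  suffices chordGap x i ≤ 0 by
    rw [chordGap] at hgap_j
    exact_mod_cast hgap_j.trans this |> sub_nonpos.mp
  rcases Nat.eq_zero_or_pos i with rfl | hi0
  · simp [chordGap]
  rcases (Nat.lt_succ_iff.mp hi).lt_or_eq with hix | rfl
  · obtain ⟨ℓ, hℓ, hlt⟩ := hL.exists_chordGap_lt hB hi0 hix
    exact absurd (hmax ℓ (Finset.mem_range.mpr (by omega))) hlt.not_ge
  · simp [chordGap, prefixOnes_length, mul_comm]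

theorem Lyndon.count_mul_length_le_of_not_lex_lt {x y : List Bool} (hLx : Lyndon x)
    (hBx : Balanced01 x) (hLy : Lyndon y) (hBy : Balanced01 y) (h : ¬ List.Lex (· < ·) x y) :
    y.count true * x.length ≤ x.count true * y.length := by
  rw [List.not_lex_lt, List.le_iff_lt_or_eq] at h
  obtain hyx | rfl := h
  · rcases lex_lt_cases hyx with ⟨⟨r, rfl⟩, -⟩ | ⟨t, hyt, hxt, he, hy, hx⟩
    · have hQ := hLx.length_mul_prefixOnes_le hBx (j := y.length) (by simp)
      simp only [prefixOnes, List.take_left] at hQ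
      linarith
    · have hP := hLy.mul_count_lt hBy (j := t + 1) (by omega)
      have hQ := hLx.length_mul_prefixOnes_le hBx (j := t + 1) (by omega)
      rw [prefixOnes_succ_of_getElem_false hyt hy] at hP
      rw [prefixOnes_succ_of_getElem_true hxt hx] at hQ
      have hsame : prefixOnes y t = prefixOnes x t := by rw [prefixOnes, prefixOnes, he]
      rw [hsame] at hP
      nlinarith
  · rw [Nat.mul_comm]

theorem count_flatten_mul_le {L : List (List Bool)} {m k : ℕ}
    (h : ∀ y ∈ L, y.count true * m ≤ k * y.length) :
    L.flatten.count true * m ≤ k * L.flatten.length := by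
  induction L with
  | nil => simp
  | cons y L ih =>
    simp only [List.flatten_cons, List.count_append, List.length_append, Nat.add_mul,
      Nat.mul_add]
    exact Nat.add_le_add (h y List.mem_cons_self)
      (ih fun z hz => h z (List.mem_cons_of_mem y hz))

/-- The lattice path of `w` runs strictly above the chord from `(0, 0)` to `(|w|, |w|₁)`
lowered by one unit. -/
def AboveLoweredChord (w : List Bool) : Prop :=
  ∀ i, 0 < i → i ≤ w.length → i * w.count true < w.length * (prefixOnes w i + 1)

theorem Lyndon.aboveLoweredChord {x : List Bool} (hL : Lyndon x) (hB : Balanced01 x) :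
    AboveLoweredChord x :=
  fun _ _ hi => hL.mul_count_lt hB hi

theorem AboveLoweredChord.append {x y : List Bool} (hx : AboveLoweredChord x)
    (hy : AboveLoweredChord y) (hslope : y.count true * x.length ≤ x.count true * y.length) :
    AboveLoweredChord (x ++ y) := by
  intro i hi hixy
  simp only [List.length_append, List.count_append] at hixy ⊢
  rcases le_or_gt i x.length with hix | hix
  · have hP := hx i hi hix
    rw [prefixOnes, List.take_append_of_le_length hix, ← prefixOnes]
    nlinarith
  · obtain ⟨r, rfl⟩ : ∃ r, i = x.length + r := ⟨i - x.length, by omega⟩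
    have hP := hy r (by omega) (by omega)
    rw [prefixOnes, List.take_append, List.take_of_length_le (by omega), List.count_append,
      Nat.add_sub_cancel_left, ← prefixOnes]
    nlinarith

theorem not_lex_lt_trans {x y z : List Bool} (hxy : ¬ List.Lex (· < ·) x y)
    (hyz : ¬ List.Lex (· < ·) y z) : ¬ List.Lex (· < ·) x z := by
  rw [List.not_lex_lt] at *
  exact List.le_trans hyz hxy

theorem DC.aboveLoweredChord {w : List Bool} (h : DC w) : AboveLoweredChord w := by
  obtain ⟨L, rfl, hL, hch⟩ := h
  have : Trans (fun a b : List Bool => ¬ List.Lex (· < ·) a b)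
      (fun a b => ¬ List.Lex (· < ·) a b) (fun a b => ¬ List.Lex (· < ·) a b) :=
    ⟨not_lex_lt_trans⟩
  induction L with
  | nil =>
    intro i hi hi'
    rw [List.flatten_nil, List.length_nil] at hi'
    omega
  | cons x L ih =>
    obtain ⟨hxL, -⟩ := List.pairwise_cons.mp hch.pairwise
    obtain ⟨hLx, hBx⟩ := hL x List.mem_cons_self
    rw [List.flatten_cons]
    refine (hLx.aboveLoweredChord hBx).append
      (ih (fun y hy => hL y (List.mem_cons_of_mem x hy)) hch.tail) (count_flatten_mul_le ?_)
    intro y hy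
    obtain ⟨hLy, hBy⟩ := hL y (List.mem_cons_of_mem x hy)
    exact hLx.count_mul_length_le_of_not_lex_lt hBx hLy hBy (hxL y hy)

theorem length_chr (a b : ℕ) : (chr a b).length = a + b := by
  simp [chr]

theorem prefixOnes_chr (a b : ℕ) {j : ℕ} (hj : j ≤ a + b) :
    prefixOnes (chr a b) j = j * b / (a + b) := by
  induction j with
  | zero => simp
  | succ j ih =>
    have hjl : j < (chr a b).length := by rw [length_chr]; omega
    have hget : (chr a b)[j] = decide (j * b / (a + b) < (j + 1) * b / (a + b)) := by
      simp [chr]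
    -- consecutive floors `⌊j b / (a + b)⌋` differ by at most one since `b ≤ a + b`
    have hmono : j * b / (a + b) ≤ (j + 1) * b / (a + b) :=
      Nat.div_le_div_right (by nlinarith)
    have hstep : (j + 1) * b / (a + b) ≤ j * b / (a + b) + 1 := by
      rw [← Nat.add_div_right _ (by omega : 0 < a + b)]
      exact Nat.div_le_div_right (by nlinarith)
    rcases hmono.lt_or_eq with hlt | heq
    · rw [prefixOnes_succ_of_getElem_true hjl (by simpa [hget] using hlt), ih (by omega)]
      omega
    · rw [prefixOnes_succ_of_getElem_false hjl (by simp [hget, heq]), ih (by omega), heq]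

theorem count_chr {a b : ℕ} (h : 0 < a + b) : (chr a b).count true = b := by
  rw [← prefixOnes_length, prefixOnes_chr a b (by rw [length_chr]), length_chr,
    Nat.mul_div_cancel_left b h]

theorem stmt18_general (u v : List Bool) (a b : ℕ)
    (hw : u ++ [true, false] ++ v = chr a b) :
    ¬ DC (u ++ [false, true] ++ v) := by
  intro hDC
  have hlen : (u ++ [false, true] ++ v).length = a + b := by
    simp [← length_chr a b, ← hw]
  have hu : u.length + 2 ≤ a + b := by
    rw [← hlen]
    simp
  have hcount : (u ++ [false, true] ++ v).count true = b := by
    rw [← count_chr (a := a) (b := b) (by omega), ← hw]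
    simp [List.count_append]
  have hchr : (u.length + 1) * b / (a + b) = u.count true + 1 := by
    rw [← prefixOnes_chr a b (by omega), ← hw]
    simp [prefixOnes, List.take_append, List.take_of_length_le]
  have hswap : prefixOnes (u ++ [false, true] ++ v) (u.length + 1) = u.count true := by
    simp [prefixOnes, List.take_append, List.take_of_length_le]
  have habove := hDC.aboveLoweredChord (u.length + 1) (by omega) (by simp)
  rw [hlen, hcount, hswap] at habove
  have hfloor := Nat.div_mul_le_self ((u.length + 1) * b) (a + b)
  rw [hchr] at hfloor
  nlinarith

/-- If `w = u10v` is a lower Christoffel word, then `u01v` is not digitally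
convex. -/
theorem stmt18 (u v : List Bool) (a b : ℕ) (hab : ¬(a = 0 ∧ b = 0))
    (hw : u ++ [true, false] ++ v = chr a b) :
    ¬ DC (u ++ [false, true] ++ v) :=
  stmt18_general u v a b hw
end
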